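/- K'(x) < 0 for all x > 0, where K'(x) = -(√π/2)(e^{-x²}/x²)·erfi(x) - √π·e^{-x²}·erfi(x) + 1/x. -/

import Mathlib

/-!
Multiplied by x², the claim becomes x·e^{x²} < (1 + 2x²)·∫₀ˣ e^{t²} dt. The difference of the two
sides vanishes at 0 and has derivative 4x·∫₀ˣ e^{t²} dt > 0, so it is positive for x > 0.
-/

open MeasureTheory

/-- The imaginary error function erfi(x) = (2/√π) ∫₀ˣ e^{t²} dt. -/
noncomputable def erfi (x : ℝ) : ℝ :=
  (2 / Real.sqrt Real.pi) * ∫ t in (0:ℝ)..x, Real.exp (t^2)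

/-- The derivative expression of K(x) = (√π/2)(e^{-x²}/x)·erfi(x):
K'(x) = -(√π/2)(e^{-x²}/x²)·erfi(x) - √π·e^{-x²}·erfi(x) + 1/x. -/
noncomputable def K' (x : ℝ) : ℝ :=
  -(Real.sqrt Real.pi / 2) * (Real.exp (-x^2) / x^2) * erfi x
    - Real.sqrt Real.pi * Real.exp (-x^2) * erfi x + 1 / x

open Real

noncomputable def integralExpSq (x : ℝ) : ℝ := ∫ t in (0 : ℝ)..x, exp (t ^ 2)

lemma hasDerivAt_integralExpSq (x : ℝ) : HasDerivAt integralExpSq (exp (x ^ 2)) x :=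
  ((continuous_pow 2).rexp.integral_hasStrictDerivAt 0 x).hasDerivAt

lemma integralExpSq_pos {x : ℝ} (hx : 0 < x) : 0 < integralExpSq x :=
  intervalIntegral.intervalIntegral_pos_of_pos ((continuous_pow 2).rexp.intervalIntegrable 0 x)
    (fun _ => exp_pos _) hx

lemma erfi_eq_integralExpSq (x : ℝ) : erfi x = 2 / √π * integralExpSq x := rfl

lemma mul_exp_sq_lt_integralExpSq {x : ℝ} (hx : 0 < x) :
    x * exp (x ^ 2) < (1 + 2 * x ^ 2) * integralExpSq x := by
  set g : ℝ → ℝ := fun y => (1 + 2 * y ^ 2) * integralExpSq y - y * exp (y ^ 2)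
  have hg : ∀ y, HasDerivAt g (4 * y * integralExpSq y) y := by
    intro y
    refine ((((hasDerivAt_pow 2 y).const_mul 2).const_add 1).mul
      (hasDerivAt_integralExpSq y)).sub ((hasDerivAt_id' y).mul (hasDerivAt_pow 2 y).exp)
      |>.congr_deriv ?_
    push_cast
    ring
  have hg_mono : StrictMonoOn g (Set.Ici 0) := by
    refine strictMonoOn_of_deriv_pos (convex_Ici 0)
      (continuous_iff_continuousAt.2 fun y => (hg y).continuousAt).continuousOn fun y hy => ?_
    rw [interior_Ici] at hy
    rw [(hg y).deriv]
    exact mul_pos (by linarith [Set.mem_Ioi.1 hy]) (integralExpSq_pos hy)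
  have hg_pos := hg_mono Set.self_mem_Ici hx.le hx
  have h0 : integralExpSq 0 = 0 := intervalIntegral.integral_same
  simp only [g, h0] at hg_pos
  linarith

lemma sq_mul_K' {x : ℝ} (hx : x ≠ 0) :
    x ^ 2 * K' x = x - exp (-x ^ 2) * ((1 + 2 * x ^ 2) * integralExpSq x) := by
  rw [K', erfi_eq_integralExpSq]
  field_simp
  ring

/-- K'(x) < 0 for all x > 0. -/
theorem K'_neg : ∀ x : ℝ, 0 < x → K' x < 0 := by
  intro x hx
  have key : x < exp (-x ^ 2) * ((1 + 2 * x ^ 2) * integralExpSq x) :=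
    calc x = exp (-x ^ 2) * (x * exp (x ^ 2)) := by rw [exp_neg]; field_simp
      _ < _ := mul_lt_mul_of_pos_left (mul_exp_sq_lt_integralExpSq hx) (exp_pos _)
  have : x ^ 2 * K' x < 0 := by rw [sq_mul_K' hx.ne']; linarith
  exact neg_of_mul_neg_right this (sq_nonneg x)
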